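/- One-step interaction unitary expansion: Let V be an N × N complex matrix. For Δt > 0 define the 2N × 2N anti-Hermitian block matrix Ω := √Δt · [[0, −V†], [V, 0]] and U := exp(Ω). Then there exists a constant C > 0, depending only on ‖V‖ (operator norm), such that for all Δt ∈ (0,1] and all ψ ∈ ℂ^N: ‖ U (ψ ⊕ 0) − ( (I − (Δt/2) V† V) ψ ⊕ √Δt · V ψ ) ‖ ≤ C · Δt^{3/2} · ‖ψ‖, where ψ ⊕ 0 and the target vector are written in the 2×1 block decomposition ℂ^{2N} = ℂ^N ⊕ ℂ^N. -/

import Mathlib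

/-!
On `ψ ⊕ 0` the second-order Taylor polynomial `1 + Ω + Ω²/2` of `exp Ω` reproduces the
Euler–Maruyama step exactly, because `Ω (ψ ⊕ 0) = 0 ⊕ √Δt V ψ` and `Ω² (ψ ⊕ 0) = -Δt V†V ψ ⊕ 0`.
The tail of the exponential series is at most `‖Ω‖³ e^‖Ω‖`, and `Ω = √Δt Ω₁` where `Ω₁` is the
generator at `Δt = 1`, so for `Δt ≤ 1` the error is `O(Δt^{3/2})` with a constant depending on
`‖Ω₁‖` alone.
-/

open Matrix

/-- The Euclidean (ℓ²) norm of a finitely-indexed complex vector. -/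
noncomputable def euclNorm {ι : Type*} [Fintype ι] (v : ι → ℂ) : ℝ :=
  ‖(WithLp.equiv 2 (ι → ℂ)).symm v‖

/-- The anti-Hermitian interaction generator `Ω := √Δt · [[0, −V†], [V, 0]]`. -/
noncomputable def interactionGen {N : ℕ} (V : Matrix (Fin N) (Fin N) ℂ) (Δt : ℝ) :
    Matrix (Fin N ⊕ Fin N) (Fin N ⊕ Fin N) ℂ :=
  Matrix.fromBlocks 0 (-((Real.sqrt Δt : ℂ) • Vᴴ)) ((Real.sqrt Δt : ℂ) • V) 0

open scoped Nat Matrix.Norms.L2Operator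

section ExpTail

variable {𝕂 𝔸 : Type*} [RCLike 𝕂] [NormedRing 𝔸] [NormedAlgebra 𝕂 𝔸] [CompleteSpace 𝔸]

theorem norm_exp_sub_sum_range_le (A : 𝔸) {n : ℕ} (hn : 0 < n) :
    ‖NormedSpace.exp A - ∑ i ∈ Finset.range n, (i !⁻¹ : 𝕂) • A ^ i‖ ≤
      ‖A‖ ^ n * Real.exp ‖A‖ := by
  have htail : NormedSpace.exp A - ∑ i ∈ Finset.range n, (i !⁻¹ : 𝕂) • A ^ i =
      ∑' i, ((i + n)!⁻¹ : 𝕂) • A ^ (i + n) := by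
    rw [← (NormedSpace.exp_series_hasSum_exp' (𝕂 := 𝕂) A).tsum_eq,
      ← (NormedSpace.expSeries_summable' A).sum_add_tsum_nat_add n, add_sub_cancel_left]
  have hterm (i : ℕ) : ‖((i + n)!⁻¹ : 𝕂) • A ^ (i + n)‖ ≤ ‖A‖ ^ n * (‖A‖ ^ i / i !) := by
    have hfact : (i ! : ℝ) ≤ (i + n)! := by exact_mod_cast Nat.factorial_le (Nat.le_add_right i n)
    calc ‖((i + n)!⁻¹ : 𝕂) • A ^ (i + n)‖ ≤ ((i + n)! : ℝ)⁻¹ * ‖A‖ ^ (i + n) := by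
          rw [norm_smul, norm_inv, RCLike.norm_natCast]
          gcongr
          exact norm_pow_le' A (by omega)
      _ ≤ (i ! : ℝ)⁻¹ * ‖A‖ ^ (i + n) := by gcongr
      _ = ‖A‖ ^ n * (‖A‖ ^ i / i !) := by ring
  have hsummable : Summable fun i ↦ ‖((i + n)!⁻¹ : 𝕂) • A ^ (i + n)‖ :=
    (summable_nat_add_iff n).mpr (NormedSpace.norm_expSeries_summable' A)
  calc ‖NormedSpace.exp A - ∑ i ∈ Finset.range n, (i !⁻¹ : 𝕂) • A ^ i‖
      ≤ ∑' i, ‖((i + n)!⁻¹ : 𝕂) • A ^ (i + n)‖ := htail ▸ norm_tsum_le_tsum_norm hsummable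
    _ ≤ ∑' i, ‖A‖ ^ n * (‖A‖ ^ i / i !) :=
        hsummable.tsum_le_tsum hterm ((Real.summable_pow_div_factorial _).mul_left _)
    _ = ‖A‖ ^ n * Real.exp ‖A‖ := by
        rw [tsum_mul_left, Real.exp_eq_exp_ℝ, NormedSpace.exp_eq_tsum_div]

theorem norm_exp_sub_one_add_add_half_sq_le (A : 𝔸) :
    ‖NormedSpace.exp A - (1 + A + (2 : 𝕂)⁻¹ • A ^ 2)‖ ≤ ‖A‖ ^ 3 * Real.exp ‖A‖ := by
  have htaylor : ∑ i ∈ Finset.range 3, (i !⁻¹ : 𝕂) • A ^ i = 1 + A + (2 : 𝕂)⁻¹ • A ^ 2 := by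
    simp [Finset.sum_range_succ, Nat.factorial]
  simpa only [htaylor] using norm_exp_sub_sum_range_le (𝕂 := 𝕂) A three_pos

end ExpTail

theorem mul_pow_three_mul_exp_le {s a : ℝ} (hs : 0 ≤ s) (hs1 : s ≤ 1) (ha : 0 ≤ a) :
    (s * a) ^ 3 * Real.exp (s * a) ≤ s ^ 3 * (a ^ 3 * Real.exp a) := by
  calc (s * a) ^ 3 * Real.exp (s * a) ≤ (s * a) ^ 3 * Real.exp a := by
        gcongr
        exact mul_le_of_le_one_left ha hs1
    _ = s ^ 3 * (a ^ 3 * Real.exp a) := by ring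

theorem euclNorm_mulVec_le {n : Type*} [Fintype n] [DecidableEq n] (A : Matrix n n ℂ)
    (v : n → ℂ) : euclNorm (A *ᵥ v) ≤ ‖A‖ * euclNorm v :=
  A.l2_opNorm_mulVec _

theorem euclNorm_sumElim_zero {ι κ : Type*} [Fintype ι] [Fintype κ] (v : ι → ℂ) :
    euclNorm (Sum.elim v (0 : κ → ℂ)) = euclNorm v := by
  simp [euclNorm, EuclideanSpace.norm_eq, Fintype.sum_sum_type]

section InteractionGen

variable {N : ℕ} (V : Matrix (Fin N) (Fin N) ℂ) {Δt : ℝ} (ψ : Fin N → ℂ)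

theorem interactionGen_eq_smul :
    interactionGen V Δt = (Real.sqrt Δt : ℂ) • interactionGen V 1 := by
  simp [interactionGen, fromBlocks_smul]

theorem norm_interactionGen : ‖interactionGen V Δt‖ = Real.sqrt Δt * ‖interactionGen V 1‖ := by
  rw [interactionGen_eq_smul, norm_smul, Complex.norm_real,
    Real.norm_of_nonneg (Real.sqrt_nonneg _)]

theorem interactionGen_mulVec_inl :
    interactionGen V Δt *ᵥ Sum.elim ψ 0 =
      Sum.elim (0 : Fin N → ℂ) (((Real.sqrt Δt : ℂ) • V) *ᵥ ψ) := by
  simp [interactionGen, fromBlocks_mulVec]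

theorem interactionGen_sq_mulVec_inl (hΔt : 0 ≤ Δt) :
    interactionGen V Δt ^ 2 *ᵥ Sum.elim ψ 0 = Sum.elim (-((Δt : ℂ) • (Vᴴ * V)) *ᵥ ψ) 0 := by
  rw [sq, ← mulVec_mulVec, interactionGen_mulVec_inl, interactionGen, fromBlocks_mulVec]
  simp only [Sum.elim_comp_inl, Sum.elim_comp_inr, mulVec_zero, zero_add, mulVec_mulVec, zero_mul,
    zero_mulVec, neg_mul, smul_mul_smul, ← Complex.ofReal_mul, Real.mul_self_sqrt hΔt]

theorem interactionGen_taylor_two_mulVec_inl (hΔt : 0 ≤ Δt) :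
    (1 + interactionGen V Δt + (2 : ℂ)⁻¹ • interactionGen V Δt ^ 2) *ᵥ Sum.elim ψ 0 =
      Sum.elim ((1 - ((Δt / 2 : ℝ) : ℂ) • (Vᴴ * V)) *ᵥ ψ) (((Real.sqrt Δt : ℂ) • V) *ᵥ ψ) := by
  rw [add_mulVec, add_mulVec, one_mulVec, smul_mulVec, interactionGen_sq_mulVec_inl V ψ hΔt,
    interactionGen_mulVec_inl]
  ext (i | i)
  · simp only [Complex.coe_smul, smul_mulVec, neg_mulVec, Pi.add_apply, Sum.elim_inl,
      Pi.zero_apply, add_zero, Pi.smul_apply, Pi.neg_apply, Complex.real_smul, smul_eq_mul, mul_neg,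
      Complex.ofReal_div, Complex.ofReal_ofNat, sub_mulVec, one_mulVec, Pi.sub_apply]
    ring
  · simp

end InteractionGen

/-- **One-step interaction unitary expansion.** For `U := exp(Ω)` with
`Ω = √Δt·[[0,−V†],[V,0]]`, there is a constant `C > 0` (depending only on `‖V‖`) such that
for all `Δt ∈ (0,1]` and all `ψ`,
`‖U(ψ ⊕ 0) − ((I − (Δt/2)V†V)ψ ⊕ √Δt·Vψ)‖ ≤ C·Δt^{3/2}·‖ψ‖`. -/
theorem interaction_unitary_expansion (N : ℕ) (V : Matrix (Fin N) (Fin N) ℂ) :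
    ∃ C > 0, ∀ Δt : ℝ, 0 < Δt → Δt ≤ 1 → ∀ ψ : Fin N → ℂ,
      euclNorm
        ((NormedSpace.exp (interactionGen V Δt)) *ᵥ Sum.elim ψ 0 -
          Sum.elim
            ((((1 : Matrix (Fin N) (Fin N) ℂ) - ((Δt / 2 : ℝ) : ℂ) • (Vᴴ * V))) *ᵥ ψ)
            (((Real.sqrt Δt : ℂ) • V) *ᵥ ψ)) ≤
        C * Δt ^ ((3 : ℝ) / 2) * euclNorm ψ := by
  set a := ‖interactionGen V 1‖
  refine ⟨a ^ 3 * Real.exp a + 1, by positivity, fun Δt hΔt hΔt1 ψ ↦ ?_⟩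
  set Ω := interactionGen V Δt
  have hs3 : Real.sqrt Δt ^ 3 = Δt ^ ((3 : ℝ) / 2) := by
    rw [Real.sqrt_eq_rpow, ← Real.rpow_natCast, ← Real.rpow_mul hΔt.le]
    norm_num
  have hscalar : ‖Ω‖ ^ 3 * Real.exp ‖Ω‖ ≤ (a ^ 3 * Real.exp a + 1) * Δt ^ ((3 : ℝ) / 2) := by
    rw [norm_interactionGen, ← hs3]
    refine (mul_pow_three_mul_exp_le (Real.sqrt_nonneg Δt) (Real.sqrt_le_one.mpr hΔt1)
      (norm_nonneg _)).trans ?_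
    nlinarith [pow_nonneg (Real.sqrt_nonneg Δt) 3]
  calc _ = euclNorm ((NormedSpace.exp Ω - (1 + Ω + (2 : ℂ)⁻¹ • Ω ^ 2)) *ᵥ Sum.elim ψ 0) := by
        rw [← interactionGen_taylor_two_mulVec_inl V ψ hΔt.le, ← sub_mulVec]
    _ ≤ ‖NormedSpace.exp Ω - (1 + Ω + (2 : ℂ)⁻¹ • Ω ^ 2)‖ * euclNorm ψ :=
        (euclNorm_mulVec_le _ _).trans_eq (by rw [euclNorm_sumElim_zero])
    _ ≤ ‖Ω‖ ^ 3 * Real.exp ‖Ω‖ * euclNorm ψ :=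
        mul_le_mul_of_nonneg_right (norm_exp_sub_one_add_add_half_sq_le Ω) (norm_nonneg _)
    _ ≤ (a ^ 3 * Real.exp a + 1) * Δt ^ ((3 : ℝ) / 2) * euclNorm ψ :=
        mul_le_mul_of_nonneg_right hscalar (norm_nonneg _)
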